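/- Let α ∈ Σ^k, ℓ, r ∈ ℕ, u a word, and suppose w ∈ H_α*(L_α,ℓ,r) ∩ u·α·Σ*·ᾱ·ū. Let x₁,…,x_m ∈ P_α(uα,ℓ) and y₁,…,y_n ∈ P_α(uα,r) (with n ≥ 1), and assume either m = 0 or |y_j| ≤ |x_m| for all 1 ≤ j ≤ n. Then x_m⋯x₁·w·ȳ₁⋯ȳ_n ∈ H_α*(L_α,ℓ,r). -/

import Mathlib

open Computability

/-- Reverse-complement of a word under the involution `bar`. -/
def wbar {S : Type} (bar : S → S) (w : List S) : List S := (w.map bar).reverse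

/-- The set of `α`-prefixes of `w` of length at most `ℓ`. -/
def Pa {S : Type} (α w : List S) (ℓ : ℕ) : Language S :=
  {v | v ++ α <+: w ∧ v.length ≤ ℓ}

/-- `α Σ* ᾱ` : words with prefix `α` and suffix `ᾱ`. -/
def Dom {S : Type} (bar : S → S) (α : List S) : Language S :=
  {z | ∃ β, z = α ++ β ++ wbar bar α}

/-- One-step parameterized hairpin completion with binding word `α`,
left bound `ℓ`, right bound `r`. -/
def HaP {S : Type} (bar : S → S) (α : List S) (ℓ r : ℕ) (L : Language S) : Language S :=
  {z | ∃ γ β, γ.length ≤ ℓ ∧ z = γ ++ α ++ β ++ wbar bar α ++ wbar bar γ ∧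
      α ++ β ++ wbar bar α ++ wbar bar γ ∈ L} ⊔
  {z | ∃ γ β, γ.length ≤ r ∧ z = γ ++ α ++ β ++ wbar bar α ++ wbar bar γ ∧
      γ ++ α ++ β ++ wbar bar α ∈ L}

/-- One-step parameterized hairpin completion `H_k(L,ℓ,r)`. -/
def HkP {S : Type} (bar : S → S) (k ℓ r : ℕ) (L : Language S) : Language S :=
  {z | ∃ α : List S, α.length = k ∧ z ∈ HaP bar α ℓ r L}

def HaIter {S : Type} (bar : S → S) (α : List S) (ℓ r : ℕ) (L : Language S) : ℕ → Language S
  | 0 => L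
  | n + 1 => HaP bar α ℓ r (HaIter bar α ℓ r L n)

/-- Iterated parameterized hairpin completion `H_α*(L,ℓ,r)`. -/
def HaStar {S : Type} (bar : S → S) (α : List S) (ℓ r : ℕ) (L : Language S) : Language S :=
  {z | ∃ n, z ∈ HaIter bar α ℓ r L n}

def HkIter {S : Type} (bar : S → S) (k ℓ r : ℕ) (L : Language S) : ℕ → Language S
  | 0 => L
  | n + 1 => HkP bar k ℓ r (HkIter bar k ℓ r L n)

/-- Iterated parameterized hairpin completion `H_k*(L,ℓ,r)`. -/
def HkStar {S : Type} (bar : S → S) (k ℓ r : ℕ) (L : Language S) : Language S :=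
  {z | ∃ n, z ∈ HkIter bar k ℓ r L n}

/-- Unbounded two-sided hairpin completion `H_k(L)`. -/
def HU {S : Type} (bar : S → S) (k : ℕ) (L : Language S) : Language S :=
  {z | ∃ γ α β, α.length = k ∧ z = γ ++ α ++ β ++ wbar bar α ++ wbar bar γ ∧
      (α ++ β ++ wbar bar α ++ wbar bar γ ∈ L ∨ γ ++ α ++ β ++ wbar bar α ∈ L)}

/-- Unbounded right-sided hairpin completion `RH_k(L)`. -/
def RHU {S : Type} (bar : S → S) (k : ℕ) (L : Language S) : Language S :=
  {z | ∃ γ α β, α.length = k ∧ z = γ ++ α ++ β ++ wbar bar α ++ wbar bar γ ∧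
      γ ++ α ++ β ++ wbar bar α ∈ L}

def HUIter {S : Type} (bar : S → S) (k : ℕ) (L : Language S) : ℕ → Language S
  | 0 => L
  | n + 1 => HU bar k (HUIter bar k L n)

/-- Iterated unbounded two-sided hairpin completion `H_k*(L)`. -/
def HUStar {S : Type} (bar : S → S) (k : ℕ) (L : Language S) : Language S :=
  {z | ∃ n, z ∈ HUIter bar k L n}

def RHUIter {S : Type} (bar : S → S) (k : ℕ) (L : Language S) : ℕ → Language S
  | 0 => L
  | n + 1 => RHU bar k (RHUIter bar k L n)

/-- Iterated unbounded right-sided hairpin completion `RH_k*(L)`. -/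
def RHUStar {S : Type} (bar : S → S) (k : ℕ) (L : Language S) : Language S :=
  {z | ∃ n, z ∈ RHUIter bar k L n}

/-- Image of a language under reverse-complement. -/
def barSet {S : Type} (bar : S → S) (A : Language S) : Language S := wbar bar '' A

/-!
Every word of `H_α*(L_α,ℓ,r)` begins with `α` and ends with `ᾱ`: this holds in `L_α`, and a
completion step `γαβᾱγ̄` inherits it because the premise forces `α` to be a prefix of `γα`.
Hence a long enough word `z` of `H_α*` ending in `ᾱx̄` already reads `αβᾱx̄`, so one left
completion step yields `xz`; dually `z` beginning with `yα` yields `zȳ`. Since all `x_iα` and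
`y_jα` are prefixes of `uα`, the suffix `ᾱū` of `w` is kept while the `x_i` are prepended
one by one. Afterwards the word begins with `x_mα` (resp. `uα` if `m = 0`), of which each `y_jα`
is a prefix since `|y_j| ≤ |x_m|`, and this prefix is kept while the `ȳ_j` are appended.
-/

section Wbar

variable {S : Type} {bar : S → S}

theorem wbar_append (a b : List S) : wbar bar (a ++ b) = wbar bar b ++ wbar bar a := by
  simp [wbar]

@[simp]
theorem length_wbar (a : List S) : (wbar bar a).length = a.length := by
  simp [wbar]

theorem wbar_wbar (hbar : Function.Involutive bar) (a : List S) : wbar bar (wbar bar a) = a := by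
  simp [wbar, hbar.comp_self]

theorem List.IsPrefix.wbar {a b : List S} (h : a <+: b) : wbar bar a <:+ wbar bar b :=
  List.reverse_suffix.2 (h.map bar)

theorem List.IsSuffix.wbar {a b : List S} (h : a <:+ b) : wbar bar a <+: wbar bar b :=
  List.reverse_prefix.2 (h.map bar)

end Wbar

namespace HaStar

variable {S : Type} {bar : S → S} {α : List S} {ℓ r : ℕ} {L : Language S}

theorem left_completion_mem {γ β : List S}
    (h : α ++ β ++ wbar bar α ++ wbar bar γ ∈ HaStar bar α ℓ r L) (hγ : γ.length ≤ ℓ) :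
    γ ++ α ++ β ++ wbar bar α ++ wbar bar γ ∈ HaStar bar α ℓ r L :=
  let ⟨n, hn⟩ := h
  ⟨n + 1, Or.inl ⟨γ, β, hγ, rfl, hn⟩⟩

theorem right_completion_mem {γ β : List S}
    (h : γ ++ α ++ β ++ wbar bar α ∈ HaStar bar α ℓ r L) (hγ : γ.length ≤ r) :
    γ ++ α ++ β ++ wbar bar α ++ wbar bar γ ∈ HaStar bar α ℓ r L :=
  let ⟨n, hn⟩ := h
  ⟨n + 1, Or.inr ⟨γ, β, hγ, rfl, hn⟩⟩

theorem prefix_and_wbar_suffix_of_prefix {γ : List S} (β : List S) (h : α <+: γ ++ α) :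
    α <+: γ ++ α ++ β ++ wbar bar α ++ wbar bar γ ∧
      wbar bar α <:+ γ ++ α ++ β ++ wbar bar α ++ wbar bar γ := by
  refine ⟨h.trans ⟨β ++ wbar bar α ++ wbar bar γ, by simp⟩, h.wbar.trans ?_⟩
  exact ⟨γ ++ α ++ β, by simp [wbar_append]⟩

theorem prefix_and_wbar_suffix_of_mem (hbar : Function.Involutive bar) (hL : L ≤ Dom bar α)
    {z : List S} (hz : z ∈ HaStar bar α ℓ r L) : α <+: z ∧ wbar bar α <:+ z := by
  obtain ⟨n, hz⟩ := hz
  induction n generalizing z with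
  | zero =>
    obtain ⟨β, rfl⟩ := hL hz
    exact ⟨⟨β ++ wbar bar α, by simp⟩, ⟨α ++ β, rfl⟩⟩
  | succ n ih =>
    rcases hz with ⟨γ, β, -, rfl, hprev⟩ | ⟨γ, β, -, rfl, hprev⟩
    · refine prefix_and_wbar_suffix_of_prefix β ?_
      have hsuf : wbar bar α <:+ wbar bar (γ ++ α) := by
        rw [wbar_append]
        refine List.suffix_of_suffix_length_le (ih hprev).2 ⟨α ++ β, by simp⟩ (by simp)
      simpa [wbar_wbar hbar] using hsuf.wbar (bar := bar)
    · refine prefix_and_wbar_suffix_of_prefix β ?_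
      exact List.prefix_of_prefix_length_le (ih hprev).1 ⟨β ++ wbar bar α, by simp⟩ (by simp)

section

variable (hbar : Function.Involutive bar) (hL : L ≤ Dom bar α)
include hbar hL

theorem append_mem_of_wbar_suffix {x z : List S} (hz : z ∈ HaStar bar α ℓ r L)
    (hsuf : wbar bar (x ++ α) <:+ z) (hlen : x.length + 2 * α.length ≤ z.length)
    (hx : x.length ≤ ℓ) : x ++ z ∈ HaStar bar α ℓ r L := by
  obtain ⟨t, rfl⟩ := hsuf
  obtain ⟨β, rfl⟩ : α <+: t := by
    refine List.prefix_of_prefix_length_le (prefix_and_wbar_suffix_of_mem hbar hL hz).1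
      (List.prefix_append _ _) ?_
    simp only [List.length_append, length_wbar] at hlen
    omega
  simpa [wbar_append] using left_completion_mem (by simpa [wbar_append] using hz) hx

theorem append_wbar_mem_of_prefix {y z : List S} (hz : z ∈ HaStar bar α ℓ r L)
    (hpre : y ++ α <+: z) (hlen : y.length + 2 * α.length ≤ z.length)
    (hy : y.length ≤ r) : z ++ wbar bar y ∈ HaStar bar α ℓ r L := by
  obtain ⟨t, rfl⟩ := hpre
  obtain ⟨β, rfl⟩ : wbar bar α <:+ t := by
    refine List.suffix_of_suffix_length_le (prefix_and_wbar_suffix_of_mem hbar hL hz).2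
      (List.suffix_append _ _) ?_
    simp only [List.length_append, length_wbar] at hlen ⊢
    omega
  simpa using right_completion_mem (by simpa using hz) hy

theorem flatten_reverse_append_mem {p : List S} :
    ∀ {xs : List (List S)} {z : List S}, z ∈ HaStar bar α ℓ r L → wbar bar p <:+ z →
      p.length + α.length ≤ z.length → (∀ x ∈ xs, x ∈ Pa α p ℓ) →
      xs.reverse.flatten ++ z ∈ HaStar bar α ℓ r L
  | [], _, hz, _, _, _ => by simpa using hz
  | x :: xs, z, hz, hp, hlen, hxs => by
    obtain ⟨hxp, hxℓ⟩ := hxs x List.mem_cons_self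
    have hxlen := hxp.length_le
    simp only [List.length_append] at hxlen
    have hxz := append_mem_of_wbar_suffix hbar hL hz (hxp.wbar.trans hp) (by omega) hxℓ
    simpa using flatten_reverse_append_mem hxz (hp.trans (List.suffix_append _ _))
      (by simp only [List.length_append]; omega) fun x hx => hxs x (List.mem_cons_of_mem _ hx)

theorem append_flatten_map_wbar_mem {p : List S} :
    ∀ {ys : List (List S)} {z : List S}, z ∈ HaStar bar α ℓ r L → p <+: z →
      p.length + α.length ≤ z.length → (∀ y ∈ ys, y ∈ Pa α p r) →
      z ++ (ys.map (wbar bar)).flatten ∈ HaStar bar α ℓ r L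
  | [], _, hz, _, _, _ => by simpa using hz
  | y :: ys, z, hz, hp, hlen, hys => by
    obtain ⟨hyp, hyr⟩ := hys y List.mem_cons_self
    have hylen := hyp.length_le
    simp only [List.length_append] at hylen
    have hyz := append_wbar_mem_of_prefix hbar hL hz (hyp.trans hp) (by omega) hyr
    simpa using append_flatten_map_wbar_mem hyz (hp.trans (List.prefix_append _ _))
      (by simp only [List.length_append]; omega) fun y hy => hys y (List.mem_cons_of_mem _ hy)

theorem append_prefix_flatten_reverse_append_of_getLast? {p xm z : List S} {xs : List (List S)}
    (hz : z ∈ HaStar bar α ℓ r L) (hp : wbar bar p <:+ z) (hlen : p.length + α.length ≤ z.length)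
    (hxs : ∀ x ∈ xs, x ∈ Pa α p ℓ) (hxm : xs.getLast? = some xm) :
    xm ++ α <+: xs.reverse.flatten ++ z := by
  have hinner := flatten_reverse_append_mem hbar hL hz hp hlen
    fun x hx => hxs x (List.dropLast_subset xs hx)
  rw [← List.dropLast_append_getLast? xm hxm]
  simpa using (List.prefix_append_right_inj xm).2 (prefix_and_wbar_suffix_of_mem hbar hL hinner).1

end

end HaStar

open HaStar

theorem extend_mem_HaStar_general {S : Type} (bar : S → S)
    (hbar : ∀ a, bar (bar a) = a) (ℓ r : ℕ)
    (α u : List S)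
    (Lα : Language S) (hL : Lα ≤ Dom bar α)
    (w : List S) (hw : w ∈ HaStar bar α ℓ r Lα)
    (hwform : ∃ β, w = u ++ α ++ β ++ wbar bar α ++ wbar bar u)
    (xs ys : List (List S))
    (hxs : ∀ x ∈ xs, x ∈ Pa α (u ++ α) ℓ)
    (hys : ∀ y ∈ ys, y ∈ Pa α (u ++ α) r)
    (hlast : xs = [] ∨ ∃ xm, xs.getLast? = some xm ∧ ∀ y ∈ ys, y.length ≤ xm.length) :
    xs.reverse.flatten ++ w ++ (ys.map (wbar bar)).flatten ∈ HaStar bar α ℓ r Lα := by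
  obtain ⟨β, hβ⟩ := hwform
  have hwsuf : wbar bar (u ++ α) <:+ w := ⟨u ++ α ++ β, by simp [hβ, wbar_append]⟩
  have hwlen : (u ++ α).length + α.length ≤ w.length := by
    simp only [hβ, List.length_append, length_wbar]; omega
  have hW := flatten_reverse_append_mem hbar hL hw hwsuf hwlen hxs
  obtain ⟨p, hpW, hplen, hysp⟩ : ∃ p, p <+: xs.reverse.flatten ++ w ∧
      p.length + α.length ≤ (xs.reverse.flatten ++ w).length ∧ ∀ y ∈ ys, y ∈ Pa α p r := by
    rcases hlast with rfl | ⟨xm, hxm, hym⟩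
    · exact ⟨u ++ α, ⟨β ++ wbar bar α ++ wbar bar u, by simp [hβ]⟩, by simpa using hwlen, hys⟩
    · have hxmu := (hxs xm (List.mem_of_getLast? hxm)).1
      have hxmlen := hxmu.length_le
      refine ⟨xm ++ α, append_prefix_flatten_reverse_append_of_getLast? hbar hL hw hwsuf hwlen hxs hxm,
        ?_, fun y hy => ⟨?_, (hys y hy).2⟩⟩
      · simp only [List.length_append] at hwlen hxmlen ⊢; omega
      · exact List.prefix_of_prefix_length_le (hys y hy).1 hxmu (by simp [hym y hy])
  exact append_flatten_map_wbar_mem hbar hL hW hpW hplen hysp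

/-- Appending `x_m ⋯ x₁` on the left and `ȳ₁ ⋯ ȳ_n` on the right of
`w ∈ H_α*(L_α,ℓ,r) ∩ uαΣ*ᾱū`, with `x_i ∈ P_α(uα,ℓ)`, `y_j ∈ P_α(uα,r)`,
`n ≥ 1`, and `m = 0` or `|y_j| ≤ |x_m|` for all `j`, stays in `H_α*(L_α,ℓ,r)`. -/
theorem extend_mem_HaStar {S : Type} (bar : S → S)
    (hbar : ∀ a, bar (bar a) = a) (k ℓ r : ℕ)
    (α u : List S) (hα : α.length = k)
    (Lα : Language S) (hL : Lα ≤ Dom bar α)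
    (w : List S) (hw : w ∈ HaStar bar α ℓ r Lα)
    (hwform : ∃ β, w = u ++ α ++ β ++ wbar bar α ++ wbar bar u)
    (xs ys : List (List S))
    (hxs : ∀ x ∈ xs, x ∈ Pa α (u ++ α) ℓ)
    (hys : ∀ y ∈ ys, y ∈ Pa α (u ++ α) r)
    (hn : ys ≠ [])
    (hlast : xs = [] ∨ ∃ xm, xs.getLast? = some xm ∧ ∀ y ∈ ys, y.length ≤ xm.length) :
    xs.reverse.flatten ++ w ++ (ys.map (wbar bar)).flatten ∈ HaStar bar α ℓ r Lα :=
  extend_mem_HaStar_general bar hbar ℓ r α u Lα hL w hw hwform xs ys hxs hys hlast
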